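/- For vectors X₁,…,Xₙ, Y₁,…,Yₙ ∈ ℝ^d, the operator norm satisfies ‖∑ᵢ Xᵢ Yᵢᵀ‖_∞ ≤ ‖∑ᵢ Xᵢ Xᵢᵀ‖_∞^{1/2} · ‖∑ᵢ Yᵢ Yᵢᵀ‖_∞^{1/2}. -/

import Mathlib

/-!
Stacking the `Xᵢ` and `Yᵢ` as the rows of `n × d` matrices `A` and `B` gives `∑ᵢ Xᵢ Yᵢᵀ = Aᵀ B`,
`∑ᵢ Xᵢ Xᵢᵀ = Aᵀ A` and `∑ᵢ Yᵢ Yᵢᵀ = Bᵀ B`. The inequality is then submultiplicativity of the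
operator norm, `‖Aᵀ B‖ ≤ ‖Aᵀ‖ ‖B‖ = ‖A‖ ‖B‖`, combined with the C⋆-identity `‖Aᵀ A‖ = ‖A‖²`.
-/

open Matrix

/-- The operator norm of a real square matrix with respect to the Euclidean `ℓ²` norm. -/
noncomputable def opNorm {d : ℕ} (M : Matrix (Fin d) (Fin d) ℝ) : ℝ :=
  ‖(Matrix.toEuclideanLin M).toContinuousLinearMap‖

open scoped Matrix.Norms.L2Operator

namespace Matrix

theorem sum_vecMulVec_eq_transpose_mul {ι m n R : Type*} [Fintype ι] [CommSemiring R]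
    (X : ι → m → R) (Y : ι → n → R) :
    ∑ i, vecMulVec (X i) (Y i) = (of X)ᵀ * of Y := by
  ext j k
  simp [mul_apply, vecMulVec_apply, sum_apply]

theorem l2_opNorm_conjTranspose_mul_le {𝕜 ι m n : Type*} [RCLike 𝕜] [Fintype ι]
    [DecidableEq ι] [Fintype m] [DecidableEq m] [Fintype n] [DecidableEq n]
    (A : Matrix ι m 𝕜) (B : Matrix ι n 𝕜) :
    ‖Aᴴ * B‖ ≤ √‖Aᴴ * A‖ * √‖Bᴴ * B‖ := by
  rw [l2_opNorm_conjTranspose_mul_self, l2_opNorm_conjTranspose_mul_self,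
    Real.sqrt_mul_self (norm_nonneg A), Real.sqrt_mul_self (norm_nonneg B),
    ← l2_opNorm_conjTranspose A]
  exact l2_opNorm_mul _ _

end Matrix

theorem opNorm_eq_l2_opNorm {d : ℕ} (M : Matrix (Fin d) (Fin d) ℝ) : opNorm M = ‖M‖ := rfl

/-- For vectors `X₁,…,Xₙ, Y₁,…,Yₙ ∈ ℝ^d`, the operator norm satisfies
`‖∑ᵢ Xᵢ Yᵢᵀ‖_∞ ≤ ‖∑ᵢ Xᵢ Xᵢᵀ‖_∞^{1/2} · ‖∑ᵢ Yᵢ Yᵢᵀ‖_∞^{1/2}`. -/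
theorem opNorm_sum_outer_le {d n : ℕ} (X Y : Fin n → Fin d → ℝ) :
    opNorm (∑ i, Matrix.vecMulVec (X i) (Y i)) ≤
      Real.sqrt (opNorm (∑ i, Matrix.vecMulVec (X i) (X i))) *
        Real.sqrt (opNorm (∑ i, Matrix.vecMulVec (Y i) (Y i))) := by
  simp only [opNorm_eq_l2_opNorm, sum_vecMulVec_eq_transpose_mul,
    ← conjTranspose_eq_transpose_of_trivial]
  exact l2_opNorm_conjTranspose_mul_le _ _
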